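/- Let τ be a finite type over Ω, let f ∈ Ω_{τ→τ} and x ∈ Ω_τ be hereditarily positive. Then for all countable ordinals α and γ: Iter_α^τ f (Iter_γ^τ f x) =hp Iter_{γ+α}^τ f x, where γ+α is ordinal addition. -/

import Mathlib

/-!  Framework: finite type structure over Ω = countable ordinals,
     limsup/liminf, transfinite iteration functionals, hereditarily
     positive and hereditarily monotone functionals. -/

noncomputable section
namespace IterOrd

open Ordinal

theorem omega1_pos : (0 : Ordinal) < ω₁ := Ordinal.omega0_pos.trans Ordinal.omega0_lt_omega_one

/-- `Om` is Ω, the set of countable ordinals (ordinals `< ω₁`). -/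
abbrev Om : Type 1 := {o : Ordinal // o < ω₁}

/-- Infimum of a subset of Ω (the minimum for nonempty sets; `0` for `∅`). -/
def infOm (s : Set Om) : Om :=
  ⟨sInf (Subtype.val '' s), by
    rcases (Subtype.val '' s).eq_empty_or_nonempty with h | h
    · rw [h]; simpa using omega1_pos
    · obtain ⟨x, _, he⟩ := csInf_mem h
      exact he ▸ x.2⟩

/-- Supremum of a subset of Ω.  Whenever the supremum of the set exists in Ω
(in particular for every countable subset, by regularity of `ω₁`) this is the
genuine supremum; otherwise it takes a junk value. -/
def supOm (s : Set Om) : Om :=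
  if h : sSup (Subtype.val '' s) < ω₁ then ⟨sSup (Subtype.val '' s), h⟩ else ⟨0, omega1_pos⟩

/-- Finite types over the base type `o` (interpreted as Ω). -/
inductive Ty : Type
  | base : Ty
  | arrow : Ty → Ty → Ty
deriving DecidableEq

/-- The full type structure over Ω: `El base = Ω` and
`El (arrow σ τ)` is the set of all functions `El σ → El τ`. -/
@[reducible] def El : Ty → Type 1
  | .base => Om
  | .arrow σ τ => El σ → El τ

/-- The order on each `El σ`: the ordinal order at base type, pointwise at arrow types. -/
def Le : (σ : Ty) → El σ → El σ → Prop
  | .base => fun x y => x ≤ y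
  | .arrow σ τ => fun f g => ∀ x : El σ, Le τ (f x) (g x)

/-- Suprema, computed pointwise at function types. -/
def supEl : (σ : Ty) → Set (El σ) → El σ
  | .base => supOm
  | .arrow σ τ => fun S (x : El σ) => supEl τ ((fun f : El (.arrow σ τ) => f x) '' S)

/-- Infima, computed pointwise at function types. -/
def infEl : (σ : Ty) → Set (El σ) → El σ
  | .base => infOm
  | .arrow σ τ => fun S (x : El σ) => infEl τ ((fun f : El (.arrow σ τ) => f x) '' S)

/-- `limsup_{ξ→ζ} f ξ = inf_{γ<ζ} sup_{γ≤ξ<ζ} f ξ`. -/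
def limsupEl (σ : Ty) (ζ : Ordinal) (f : ∀ ξ : Ordinal, ξ < ζ → El σ) : El σ :=
  infEl σ {y | ∃ γ, ∃ _ : γ < ζ, y = supEl σ {z | ∃ ξ, ∃ h : ξ < ζ, γ ≤ ξ ∧ z = f ξ h}}

/-- `liminf_{ξ→ζ} f ξ = sup_{γ<ζ} inf_{γ≤ξ<ζ} f ξ`. -/
def liminfEl (σ : Ty) (ζ : Ordinal) (f : ∀ ξ : Ordinal, ξ < ζ → El σ) : El σ :=
  supEl σ {y | ∃ γ, ∃ _ : γ < ζ, y = infEl σ {z | ∃ ξ, ∃ h : ξ < ζ, γ ≤ ξ ∧ z = f ξ h}}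

/-- `limsup` of a ζ-indexed sequence of ordinals. -/
def oLimsup (ζ : Ordinal) (a : Ordinal → Ordinal) : Ordinal :=
  sInf {s | ∃ γ, γ < ζ ∧ s = sSup (a '' {ξ | γ ≤ ξ ∧ ξ < ζ})}

/-- `liminf` of a ζ-indexed sequence of ordinals. -/
def oLiminf (ζ : Ordinal) (a : Ordinal → Ordinal) : Ordinal :=
  sSup {s | ∃ γ, γ < ζ ∧ s = sInf (a '' {ξ | γ ≤ ξ ∧ ξ < ζ})}

/-- The α-iteration functional of type σ:
`Iter 0 f x = x`, `Iter (α+1) f x = f (Iter α f x)`, and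
`Iter μ f x = limsup_{ξ→μ} Iter ξ f x` for limit μ. -/
def Iter (σ : Ty) (α : Ordinal) : (El σ → El σ) → El σ → El σ :=
  Ordinal.limitRecOn (motive := fun _ => (El σ → El σ) → El σ → El σ) α
    (fun _ x => x)
    (fun _ ih f x => f (ih f x))
    (fun μ _ ih f x => limsupEl σ μ (fun ξ h => ih ξ h f x))

/-- The pair (hereditarily positive, ≤hp), defined simultaneously by recursion on the type.
Every element of `Ω` and of `Ω_{ρ→τ}` with `ρ ≠ τ` is h.p., and `≤hp` there is `≤`;
`f : Ω_{τ→τ}` is h.p. iff it preserves h.p., is inflationary on h.p. arguments and is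
monotone (w.r.t. `≤hp`) on h.p. arguments; `f ≤hp f'` on `Ω_{τ→τ}` iff `f x ≤hp f' x`
for every h.p. `x`. -/
def HPaux : (σ : Ty) → (El σ → Prop) × (El σ → El σ → Prop)
  | .base => ⟨fun _ => True, fun x y => x ≤ y⟩
  | .arrow ρ τ =>
      ⟨fun f =>
        if h : ρ = τ then
          (∀ x, (HPaux ρ).1 x → (HPaux τ).1 (f x)) ∧
          (∀ x, (HPaux ρ).1 x → (HPaux τ).2 (cast (congrArg El h) x) (f x)) ∧
          (∀ x y, (HPaux ρ).1 x → (HPaux ρ).1 y → (HPaux ρ).2 x y → (HPaux τ).2 (f x) (f y))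
        else True,
       fun f g =>
        if ρ = τ then ∀ x, (HPaux ρ).1 x → (HPaux τ).2 (f x) (g x)
        else Le (.arrow ρ τ) f g⟩

/-- Hereditarily positive functionals. -/
def Hp (σ : Ty) : El σ → Prop := (HPaux σ).1

/-- The order `≤hp`. -/
def HpLe (σ : Ty) : El σ → El σ → Prop := (HPaux σ).2

/-- `f =hp g` iff `f ≤hp g` and `g ≤hp f`. -/
def HpEq (σ : Ty) (f g : El σ) : Prop := HpLe σ f g ∧ HpLe σ g f

/-- The pair (hereditarily monotone, ≤ on the hereditarily monotone structure),
by recursion on the type.  `f` is hereditarily monotone iff it maps hereditarily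
monotone arguments to hereditarily monotone values, monotonically; the order is
pointwise over hereditarily monotone arguments (i.e. the order of `Ω^mon`). -/
def HMaux : (σ : Ty) → (El σ → Prop) × (El σ → El σ → Prop)
  | .base => ⟨fun _ => True, fun x y => x ≤ y⟩
  | .arrow σ τ =>
      ⟨fun f =>
        (∀ x, (HMaux σ).1 x → (HMaux τ).1 (f x)) ∧
        (∀ x y, (HMaux σ).1 x → (HMaux σ).1 y → (HMaux σ).2 x y → (HMaux τ).2 (f x) (f y)),
       fun f g => ∀ x, (HMaux σ).1 x → (HMaux τ).2 (f x) (g x)⟩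

/-- Hereditarily monotone functionals: the members of the type structure `Ω^mon`. -/
def HM (σ : Ty) : El σ → Prop := (HMaux σ).1

/-- The (pointwise) order of the hereditarily monotone type structure `Ω^mon`. -/
def LeHM (σ : Ty) : El σ → El σ → Prop := (HMaux σ).2

/-- Equality in the hereditarily monotone type structure `Ω^mon`. -/
def EqHM (σ : Ty) (f g : El σ) : Prop := LeHM σ f g ∧ LeHM σ g f

/-! Transfinite induction on `α`, with all iterates of `f` from `x` hereditarily positive.
At a successor both sides are images under `f` of the two sides at the predecessor, and `f` is
`≤hp`-monotone on h.p. arguments. At a limit `μ`, a limsup only depends on a final segment of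
the family, and the final segments of the family over `γ + μ` are those of the family over `μ`
shifted by `γ`; so both sides are limsups over `μ` of `=hp`-equal families, and limsup is
`≤hp`-monotone since, all index sets being countable, the suprema involved are genuine suprema
in `Ω` (regularity of `ω₁`). -/

section Omega

theorem countable_Iio_of_lt_omega_one {ζ : Ordinal} (hζ : ζ < ω₁) : (Set.Iio ζ).Countable := by
  rw [← Cardinal.le_aleph0_iff_set_countable, Cardinal.mk_Iio_ordinal, Cardinal.lift_le_aleph0,
    ← Order.lt_succ_iff, Cardinal.succ_aleph0, ← Cardinal.lt_ord, Cardinal.ord_aleph]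
  exact hζ

theorem sSup_lt_omega_one {T : Set Ordinal} (hT : T.Countable) (h : ∀ o ∈ T, o < ω₁) :
    sSup T < ω₁ := by
  have := hT.to_subtype
  rw [sSup_eq_iSup']
  exact Ordinal.iSup_lt_omega_one fun o => h o o.2

theorem le_supOm {S : Set Om} (hS : S.Countable) {z : Om} (hz : z ∈ S) : z ≤ supOm S := by
  have hS' := hS.image Subtype.val
  have := hS'.to_subtype
  rw [supOm, dif_pos (sSup_lt_omega_one hS' (by rintro _ ⟨w, -, rfl⟩; exact w.2))]
  exact le_csSup Ordinal.bddAbove_of_small (Set.mem_image_of_mem _ hz)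

theorem supOm_le {S : Set Om} {y : Om} (h : ∀ z ∈ S, z ≤ y) : supOm S ≤ y := by
  unfold supOm
  split
  · show sSup (Subtype.val '' S) ≤ y.val
    refine csSup_le' ?_
    rintro _ ⟨z, hz, rfl⟩
    exact h z hz
  · exact zero_le (a := y.val)

theorem supOm_mono {S T : Set Om} (hST : S ⊆ T) (hT : T.Countable) : supOm S ≤ supOm T :=
  supOm_le fun _ hz => le_supOm hT (hST hz)

theorem infOm_le {S : Set Om} {z : Om} (hz : z ∈ S) : infOm S ≤ z :=
  csInf_le' (Set.mem_image_of_mem Subtype.val hz)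

theorem le_infOm {S : Set Om} (hS : S.Nonempty) {y : Om} (h : ∀ z ∈ S, y ≤ z) : y ≤ infOm S :=
  le_csInf (hS.image Subtype.val) (by rintro _ ⟨z, hz, rfl⟩; exact h z hz)

end Omega

section Tails

variable {α : Type*} {ζ : Ordinal}

def tailSet (F : ∀ ξ, ξ < ζ → α) (γ : Ordinal) : Set α :=
  {z | ∃ ξ, ∃ h : ξ < ζ, γ ≤ ξ ∧ z = F ξ h}

theorem limsupEl_eq_infEl_tailSet (σ : Ty) (F : ∀ ξ, ξ < ζ → El σ) :
    limsupEl σ ζ F = infEl σ {y | ∃ γ, ∃ _ : γ < ζ, y = supEl σ (tailSet F γ)} := rfl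

theorem tailSet_countable (hζ : ζ < ω₁) (F : ∀ ξ, ξ < ζ → α) (γ : Ordinal) :
    (tailSet F γ).Countable := by
  have := (countable_Iio_of_lt_omega_one hζ).to_subtype
  refine (Set.countable_range fun ξ : Set.Iio ζ => F ξ ξ.2).mono ?_
  rintro _ ⟨ξ, h, -, rfl⟩
  exact ⟨⟨ξ, h⟩, rfl⟩

theorem tailSet_anti (F : ∀ ξ, ξ < ζ → α) {γ γ' : Ordinal} (h : γ ≤ γ') :
    tailSet F γ' ⊆ tailSet F γ := by
  rintro _ ⟨ξ, hξ, hγ'ξ, rfl⟩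
  exact ⟨ξ, hξ, h.trans hγ'ξ, rfl⟩

theorem image_tailSet {β : Type*} (g : α → β) (F : ∀ ξ, ξ < ζ → α) (γ : Ordinal) :
    g '' tailSet F γ = tailSet (fun ξ h => g (F ξ h)) γ := by
  ext
  simp [tailSet, eq_comm]

theorem tailSet_add {γ μ : Ordinal} (G : ∀ η, η < γ + μ → α) (δ : Ordinal) :
    tailSet (fun ξ (h : ξ < μ) => G (γ + ξ) ((add_lt_add_iff_left γ).2 h)) δ
      = tailSet G (γ + δ) := by
  ext z
  constructor
  · rintro ⟨ξ, h, hδξ, rfl⟩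
    exact ⟨γ + ξ, _, add_le_add_right hδξ γ, rfl⟩
  · rintro ⟨η, h, hη, rfl⟩
    obtain ⟨ξ, rfl⟩ := exists_add_of_le (le_self_add.trans hη)
    exact ⟨ξ, (add_lt_add_iff_left γ).1 h, (add_le_add_iff_left γ).1 hη, rfl⟩

end Tails

section LimsupBase

variable {ζ : Ordinal}

theorem limsupEl_base_le_supOm_tailSet (F : ∀ ξ, ξ < ζ → Om) {γ : Ordinal} (hγ : γ < ζ) :
    limsupEl .base ζ F ≤ supOm (tailSet F γ) :=
  infOm_le ⟨γ, hγ, rfl⟩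

theorem le_limsupEl_base_of_le_supOm_tailSet (hζ0 : 0 < ζ) {F : ∀ ξ, ξ < ζ → Om} {c : Om}
    (h : ∀ γ < ζ, c ≤ supOm (tailSet F γ)) : c ≤ limsupEl .base ζ F := by
  refine le_infOm ?_ ?_
  · exact ⟨_, 0, hζ0, rfl⟩
  · rintro _ ⟨γ, hγ, rfl⟩
    exact h γ hγ

theorem limsupEl_base_le_limsupEl_base (hζ : ζ < ω₁) {F G : ∀ ξ, ξ < ζ → Om}
    (h : ∀ ξ (hξ : ξ < ζ), F ξ hξ ≤ G ξ hξ) : limsupEl .base ζ F ≤ limsupEl .base ζ G := by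
  rcases eq_zero_or_pos ζ with rfl | hζ0
  · simp [limsupEl_eq_infEl_tailSet]
  refine le_limsupEl_base_of_le_supOm_tailSet hζ0 fun γ hγ => ?_
  refine (limsupEl_base_le_supOm_tailSet F hγ).trans (supOm_le ?_)
  rintro _ ⟨ξ, hξ, hγξ, rfl⟩
  exact (h ξ hξ).trans (le_supOm (tailSet_countable hζ G γ) ⟨ξ, hξ, hγξ, rfl⟩)

theorem le_limsupEl_base (hζ : ζ < ω₁) (hζ0 : 0 < ζ) {c : Om} {F : ∀ ξ, ξ < ζ → Om}
    (h : ∀ ξ (hξ : ξ < ζ), c ≤ F ξ hξ) : c ≤ limsupEl .base ζ F :=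
  le_limsupEl_base_of_le_supOm_tailSet hζ0 fun γ hγ =>
    (h γ hγ).trans (le_supOm (tailSet_countable hζ F γ) ⟨γ, hγ, le_rfl, rfl⟩)

theorem limsupEl_base_add {γ μ : Ordinal} (hμ : 0 < μ) (hγμ : γ + μ < ω₁)
    (G : ∀ η, η < γ + μ → Om) :
    limsupEl .base (γ + μ) G
      = limsupEl .base μ (fun ξ h => G (γ + ξ) ((add_lt_add_iff_left γ).2 h)) := by
  apply le_antisymm
  · refine le_limsupEl_base_of_le_supOm_tailSet hμ fun δ hδ => ?_
    rw [tailSet_add]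
    exact limsupEl_base_le_supOm_tailSet G ((add_lt_add_iff_left γ).2 hδ)
  · refine le_limsupEl_base_of_le_supOm_tailSet (hμ.trans_le le_add_self) fun δ hδ => ?_
    rcases le_total γ δ with hγδ | hδγ
    · obtain ⟨ξ, rfl⟩ := exists_add_of_le hγδ
      rw [← tailSet_add]
      exact limsupEl_base_le_supOm_tailSet _ ((add_lt_add_iff_left γ).1 hδ)
    · calc _ ≤ supOm (tailSet G (γ + 0)) := by
            rw [← tailSet_add]; exact limsupEl_base_le_supOm_tailSet _ hμ
        _ ≤ _ := supOm_mono (tailSet_anti G (by simpa using hδγ)) (tailSet_countable hγμ G δ)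

end LimsupBase

section Hp

theorem hp_arrow_of_ne {ρ τ : Ty} (h : ρ ≠ τ) (f : El (.arrow ρ τ)) : Hp (.arrow ρ τ) f := by
  simp [Hp, HPaux, h]

theorem hp_arrow_self_iff (ρ : Ty) (f : El (.arrow ρ ρ)) :
    Hp (.arrow ρ ρ) f ↔
      (∀ x, Hp ρ x → Hp ρ (f x)) ∧ (∀ x, Hp ρ x → HpLe ρ x (f x)) ∧
      (∀ x y, Hp ρ x → Hp ρ y → HpLe ρ x y → HpLe ρ (f x) (f y)) := by
  simp [Hp, HpLe, HPaux]

theorem hpLe_arrow_self_iff (ρ : Ty) (f g : El (.arrow ρ ρ)) :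
    HpLe (.arrow ρ ρ) f g ↔ ∀ x, Hp ρ x → HpLe ρ (f x) (g x) := by
  simp [Hp, HpLe, HPaux]

theorem hpLe_arrow_iff_of_ne {ρ τ : Ty} (h : ρ ≠ τ) (f g : El (.arrow ρ τ)) :
    HpLe (.arrow ρ τ) f g ↔ Le (.arrow ρ τ) f g := by
  simp [HpLe, HPaux, h]

theorem Le.refl : ∀ (σ : Ty) (x : El σ), Le σ x x
  | .base, x => le_refl x
  | .arrow _ τ, f => fun x => Le.refl τ (f x)

theorem HpLe.refl : ∀ (σ : Ty) (x : El σ), HpLe σ x x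
  | .base, x => le_refl x
  | .arrow ρ τ, f => by
    by_cases h : ρ = τ
    · subst h
      exact (hpLe_arrow_self_iff ρ f f).2 fun x _ => HpLe.refl ρ (f x)
    · exact (hpLe_arrow_iff_of_ne h f f).2 (Le.refl _ f)

end Hp

section Limsup

variable {ζ : Ordinal}

theorem limsupEl_apply {σ τ : Ty} (F : ∀ ξ, ξ < ζ → El (.arrow σ τ)) (x : El σ) :
    limsupEl (.arrow σ τ) ζ F x = limsupEl τ ζ (fun ξ h => F ξ h x) := by
  simp only [limsupEl_eq_infEl_tailSet, infEl, supEl, image_tailSet]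
  congr 1
  ext
  simp [eq_comm]

theorem limsupEl_le_limsupEl (hζ : ζ < ω₁) : ∀ (σ : Ty) {F G : ∀ ξ, ξ < ζ → El σ},
    (∀ ξ (hξ : ξ < ζ), Le σ (F ξ hξ) (G ξ hξ)) → Le σ (limsupEl σ ζ F) (limsupEl σ ζ G)
  | .base, _, _, h => limsupEl_base_le_limsupEl_base hζ h
  | .arrow _ τ, _, _, h => fun x => by
    rw [limsupEl_apply, limsupEl_apply]
    exact limsupEl_le_limsupEl hζ τ fun ξ hξ => h ξ hξ x

theorem le_limsupEl (hζ : ζ < ω₁) (hζ0 : 0 < ζ) : ∀ (σ : Ty) {c : El σ}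
    {F : ∀ ξ, ξ < ζ → El σ}, (∀ ξ (hξ : ξ < ζ), Le σ c (F ξ hξ)) → Le σ c (limsupEl σ ζ F)
  | .base, _, _, h => le_limsupEl_base hζ hζ0 h
  | .arrow _ τ, _, _, h => fun x => by
    rw [limsupEl_apply]
    exact le_limsupEl hζ hζ0 τ fun ξ hξ => h ξ hξ x

theorem limsupEl_hpLe_limsupEl (hζ : ζ < ω₁) : ∀ (σ : Ty) {F G : ∀ ξ, ξ < ζ → El σ},
    (∀ ξ (hξ : ξ < ζ), HpLe σ (F ξ hξ) (G ξ hξ)) → HpLe σ (limsupEl σ ζ F) (limsupEl σ ζ G)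
  | .base, _, _, h => limsupEl_base_le_limsupEl_base hζ h
  | .arrow ρ τ, _, _, h => by
    by_cases hρτ : ρ = τ
    · subst hρτ
      refine (hpLe_arrow_self_iff ρ _ _).2 fun x hx => ?_
      rw [limsupEl_apply, limsupEl_apply]
      exact limsupEl_hpLe_limsupEl hζ ρ fun ξ hξ => (hpLe_arrow_self_iff ρ _ _).1 (h ξ hξ) x hx
    · simp only [hpLe_arrow_iff_of_ne hρτ] at h ⊢
      exact limsupEl_le_limsupEl hζ _ h

theorem hpLe_limsupEl (hζ : ζ < ω₁) (hζ0 : 0 < ζ) : ∀ (σ : Ty) {c : El σ}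
    {F : ∀ ξ, ξ < ζ → El σ}, (∀ ξ (hξ : ξ < ζ), HpLe σ c (F ξ hξ)) → HpLe σ c (limsupEl σ ζ F)
  | .base, _, _, h => le_limsupEl_base hζ hζ0 h
  | .arrow ρ τ, _, _, h => by
    by_cases hρτ : ρ = τ
    · subst hρτ
      refine (hpLe_arrow_self_iff ρ _ _).2 fun x hx => ?_
      rw [limsupEl_apply]
      exact hpLe_limsupEl hζ hζ0 ρ fun ξ hξ => (hpLe_arrow_self_iff ρ _ _).1 (h ξ hξ) x hx
    · simp only [hpLe_arrow_iff_of_ne hρτ] at h ⊢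
      exact le_limsupEl hζ hζ0 _ h

theorem hp_limsupEl (hζ : ζ < ω₁) (hζ0 : 0 < ζ) : ∀ (σ : Ty) {F : ∀ ξ, ξ < ζ → El σ},
    (∀ ξ (hξ : ξ < ζ), Hp σ (F ξ hξ)) → Hp σ (limsupEl σ ζ F)
  | .base, _, _ => trivial
  | .arrow ρ τ, _, h => by
    by_cases hρτ : ρ = τ
    · subst hρτ
      have hF := fun ξ hξ => (hp_arrow_self_iff ρ _).1 (h ξ hξ)
      refine (hp_arrow_self_iff ρ _).2 ⟨fun x hx => ?_, fun x hx => ?_, fun x y hx hy hxy => ?_⟩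
      · rw [limsupEl_apply]
        exact hp_limsupEl hζ hζ0 ρ fun ξ hξ => (hF ξ hξ).1 x hx
      · rw [limsupEl_apply]
        exact hpLe_limsupEl hζ hζ0 ρ fun ξ hξ => (hF ξ hξ).2.1 x hx
      · rw [limsupEl_apply, limsupEl_apply]
        exact limsupEl_hpLe_limsupEl hζ ρ fun ξ hξ => (hF ξ hξ).2.2 x y hx hy hxy
    · exact hp_arrow_of_ne hρτ _

theorem limsupEl_add {γ μ : Ordinal} (hμ : 0 < μ) (hγμ : γ + μ < ω₁) :
    ∀ (σ : Ty) (G : ∀ η, η < γ + μ → El σ),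
    limsupEl σ (γ + μ) G = limsupEl σ μ (fun ξ h => G (γ + ξ) ((add_lt_add_iff_left γ).2 h))
  | .base, G => limsupEl_base_add hμ hγμ G
  | .arrow _ τ, G => funext fun x => by
    rw [limsupEl_apply, limsupEl_apply]
    exact limsupEl_add hμ hγμ τ fun η h => G η h x

end Limsup

section Iter

variable (σ : Ty) (f : El σ → El σ) (x : El σ)

theorem iter_zero : Iter σ 0 f x = x := by
  unfold Iter
  rw [Ordinal.limitRecOn_zero]

theorem iter_add_one (α : Ordinal) : Iter σ (α + 1) f x = f (Iter σ α f x) := by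
  unfold Iter
  rw [Ordinal.limitRecOn_add_one]

theorem iter_limit {μ : Ordinal} (hμ : Order.IsSuccLimit μ) :
    Iter σ μ f x = limsupEl σ μ (fun ξ _ => Iter σ ξ f x) := by
  unfold Iter
  rw [Ordinal.limitRecOn_limit _ _ _ _ hμ]

variable {σ f x}

theorem hp_iter (hf : Hp (.arrow σ σ) f) (hx : Hp σ x) {α : Ordinal} (hα : α < ω₁) :
    Hp σ (Iter σ α f x) := by
  induction α using Ordinal.limitRecOn with
  | zero => rwa [iter_zero]
  | add_one β ih =>
    rw [iter_add_one]
    exact ((hp_arrow_self_iff σ f).1 hf).1 _ (ih ((lt_add_one β).trans hα))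
  | limit μ hμ ih =>
    rw [iter_limit σ f x hμ]
    exact hp_limsupEl hα hμ.bot_lt σ fun ξ hξ => ih ξ hξ (hξ.trans hα)

end Iter

/-- For h.p. `f ∈ Ω_{τ→τ}` and h.p. `x ∈ Ω_τ`, and countable ordinals
`α`, `γ`: `Iter_α^τ f (Iter_γ^τ f x) =hp Iter_{γ+α}^τ f x`. -/
theorem iter_comp_hpEq_iter_add (τ : Ty) (f : El (.arrow τ τ)) (hf : Hp (.arrow τ τ) f)
    (x : El τ) (hx : Hp τ x) (α γ : Ordinal) (hα : α < ω₁) (hγ : γ < ω₁) :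
    HpEq τ (Iter τ α f (Iter τ γ f x)) (Iter τ (γ + α) f x) := by
  induction α using Ordinal.limitRecOn with
  | zero =>
    rw [iter_zero, add_zero]
    exact ⟨HpLe.refl τ _, HpLe.refl τ _⟩
  | add_one β ih =>
    have hβ : β < ω₁ := (lt_add_one β).trans hα
    have hf_mono := ((hp_arrow_self_iff τ f).1 hf).2.2
    have hp_left := hp_iter hf (hp_iter hf hx hγ) hβ
    have hp_right := hp_iter hf hx (isPrincipal_add_omega 1 hγ hβ)
    obtain ⟨h_le, h_ge⟩ := ih hβ
    rw [← add_assoc, iter_add_one, iter_add_one]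
    exact ⟨hf_mono _ _ hp_left hp_right h_le, hf_mono _ _ hp_right hp_left h_ge⟩
  | limit μ hμ ih =>
    rw [iter_limit τ f _ hμ, iter_limit τ f x (Ordinal.isSuccLimit_add γ hμ),
      limsupEl_add hμ.bot_lt (isPrincipal_add_omega 1 hγ hα)]
    exact ⟨limsupEl_hpLe_limsupEl hα τ fun ξ hξ => (ih ξ hξ (hξ.trans hα)).1,
      limsupEl_hpLe_limsupEl hα τ fun ξ hξ => (ih ξ hξ (hξ.trans hα)).2⟩

end IterOrd
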